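/- Suppose moduli spaces M̄(B_i, B_{i-j}) are abstract topological chains of degree j + b_i − 1 with boundary ∂M̄(B_i,B_{i-j}) = (−1)^{i+b_i} Σ_{i-j<n<i} M̄(B_i,B_n) ×_{B_n} M̄(B_n,B_{i-j}), where b_i = dim B_i and fibered products over B_n lower degree by b_n and satisfy the signed Leibniz rule ∂(P×_B Q) = ∂P ×_B Q + (−1)^{deg P + dim B} P ×_B ∂Q. Then ∂ ∘ ∂ = 0 on each M̄(B_i, B_{i-j}). -/

import Mathlib

/-!
Applying `∂` to `∂M̄(B_i,B_a)` and expanding each `∂(M̄(B_i,B_n) ×_{B_n} M̄(B_n,B_a))` by the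
Leibniz rule and the boundary formula produces triple products
`M̄(B_i,B_k) × M̄(B_k,B_n) × M̄(B_n,B_a)` indexed by `a < n < k < i`. By associativity each
triple appears exactly twice: once from differentiating the left factor and once from the right
factor. The Leibniz sign `(-1)^{deg M̄(B_i,B_n) + b_n}` times the boundary sign `(-1)^{n + b_n}`
is `-(-1)^{i + b_i}`, so the two occurrences cancel.
-/

open Finset

lemma Finset.sum_Ioo_sum_Ioo_comm {M : Type*} [AddCommMonoid M] (a i : ℕ) (f : ℕ → ℕ → M) :
    ∑ n ∈ Ioo a i, ∑ k ∈ Ioo n i, f k n = ∑ n ∈ Ioo a i, ∑ k ∈ Ioo a n, f n k :=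
  Finset.sum_comm' fun n k => by simp only [mem_Ioo]; omega

lemma neg_one_zpow_add_mul_neg_one_pow (i n b c : ℕ) :
    (-1 : ℤˣ) ^ ((i : ℤ) - n + b - 1 + c) * (-1) ^ (n + c) = -(-1) ^ (i + b) := by
  rw [← zpow_natCast, ← zpow_natCast, ← Int.negOnePow_def, ← Int.negOnePow_def,
    ← Int.negOnePow_def, ← Int.negOnePow_add, ← Int.negOnePow_succ, Int.negOnePow_eq_iff]
  exact ⟨(c : ℤ) - 1, by push_cast; ring⟩

section MorseComplex

variable {A : Type*} [AddCommGroup A] {m : ℕ} {bdim : ℕ → ℕ} {G : ℤ → AddSubgroup A}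
  {d : A →+ A} {μ : ℕ → A →+ A →+ A} {Msp : ℕ → ℕ → A}

lemma boundary_fiberedProduct
    (hMgrade : ∀ b a : ℕ, a < b → Msp b a ∈ G ((b : ℤ) - a + bdim b - 1))
    (hassoc : ∀ (n n' : ℕ) (x y z : A), μ n' (μ n x y) z = μ n x (μ n' y z))
    (hleib : ∀ (n : ℕ) (p : ℤ), ∀ x ∈ G p, ∀ y : A,
      d (μ n x y) =
        μ n (d x) y + (((-1 : ℤˣ) ^ (p + (bdim n : ℤ))) : ℤˣ).val • μ n x (d y))
    (hbdry : ∀ i a : ℕ, a < i → i ≤ m →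
      d (Msp i a) = ((-1 : ℤ) ^ (i + bdim i)) •
        ∑ n ∈ Finset.Ioo a i, μ n (Msp i n) (Msp n a))
    {i n a : ℕ} (han : a < n) (hni : n < i) (him : i ≤ m) :
    d (μ n (Msp i n) (Msp n a)) =
      (-1 : ℤ) ^ (i + bdim i) • ∑ k ∈ Ioo n i, μ k (Msp i k) (μ n (Msp k n) (Msp n a)) -
        (-1 : ℤ) ^ (i + bdim i) • ∑ k ∈ Ioo a n, μ n (Msp i n) (μ k (Msp n k) (Msp k a)) := by
  have hsign : (((-1 : ℤˣ) ^ ((i : ℤ) - n + bdim i - 1 + bdim n) : ℤˣ) : ℤ) *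
      (-1) ^ (n + bdim n) = -(-1) ^ (i + bdim i) := by
    have h := congrArg Units.val (neg_one_zpow_add_mul_neg_one_pow i n (bdim i) (bdim n))
    simpa only [Units.val_mul, Units.val_neg, Units.val_pow_eq_pow_val, Units.val_one] using h
  rw [hleib n _ (Msp i n) (hMgrade i n hni), hbdry i n hni him, hbdry n a han (hni.le.trans him)]
  simp only [map_zsmul, map_sum, AddMonoidHom.smul_apply, AddMonoidHom.finsetSum_apply, hassoc,
    smul_smul]
  rw [hsign, neg_smul, sub_eq_add_neg]

end MorseComplex

theorem stmt_14_general (m : ℕ) (bdim : ℕ → ℕ) (A : Type*) [AddCommGroup A]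
    (G : ℤ → AddSubgroup A) (d : A →+ A) (μ : ℕ → A →+ A →+ A)
    (Msp : ℕ → ℕ → A)
    (hMgrade : ∀ b a : ℕ, a < b → Msp b a ∈ G ((b : ℤ) - a + bdim b - 1))
    (hassoc : ∀ (n n' : ℕ) (x y z : A), μ n' (μ n x y) z = μ n x (μ n' y z))
    (hleib : ∀ (n : ℕ) (p : ℤ), ∀ x ∈ G p, ∀ y : A,
      d (μ n x y) =
        μ n (d x) y + (((-1 : ℤˣ) ^ (p + (bdim n : ℤ))) : ℤˣ).val • μ n x (d y))
    (hbdry : ∀ i a : ℕ, a < i → i ≤ m →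
      d (Msp i a) = ((-1 : ℤ) ^ (i + bdim i)) •
        ∑ n ∈ Finset.Ioo a i, μ n (Msp i n) (Msp n a)) :
    ∀ i a : ℕ, a < i → i ≤ m → d (d (Msp i a)) = 0 := by
  intro i a hai him
  have hexpand : ∀ n ∈ Ioo a i, d (μ n (Msp i n) (Msp n a)) = _ := fun n hn =>
    boundary_fiberedProduct hMgrade hassoc hleib hbdry (mem_Ioo.1 hn).1 (mem_Ioo.1 hn).2 him
  rw [hbdry i a hai him, map_zsmul, map_sum, sum_congr rfl hexpand, sum_sub_distrib,
    ← smul_sum, ← smul_sum, sum_Ioo_sum_Ioo_comm, sub_self, smul_zero]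

/-- Lemma 5.8 of Banyaga–Hurtubise, abstractly: the compactified moduli spaces
`M̄(B_b, B_a)` are abstract topological chains of degree `(b-a) + dim B_b - 1`
with boundary
`∂M̄(B_i,B_a) = (-1)^{i + dim B_i} ∑_{a<n<i} M̄(B_i,B_n) ×_{B_n} M̄(B_n,B_a)`,
where the fibered product `×_{B_n}` lowers degree by `dim B_n` and satisfies the
signed Leibniz rule.  Then the boundary squares to zero on each `M̄(B_i,B_a)`. -/
theorem stmt_14 (m : ℕ) (bdim : ℕ → ℕ) (A : Type*) [AddCommGroup A]
    (G : ℤ → AddSubgroup A) (d : A →+ A) (μ : ℕ → A →+ A →+ A)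
    (Msp : ℕ → ℕ → A)
    (hMgrade : ∀ b a : ℕ, a < b → Msp b a ∈ G ((b : ℤ) - a + bdim b - 1))
    (hμgrade : ∀ (n : ℕ) (p q : ℤ), ∀ x ∈ G p, ∀ y ∈ G q,
      μ n x y ∈ G (p + q - bdim n))
    (hassoc : ∀ (n n' : ℕ) (x y z : A), μ n' (μ n x y) z = μ n x (μ n' y z))
    (hleib : ∀ (n : ℕ) (p : ℤ), ∀ x ∈ G p, ∀ y : A,
      d (μ n x y) =
        μ n (d x) y + (((-1 : ℤˣ) ^ (p + (bdim n : ℤ))) : ℤˣ).val • μ n x (d y))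
    (hbdry : ∀ i a : ℕ, a < i → i ≤ m →
      d (Msp i a) = ((-1 : ℤ) ^ (i + bdim i)) •
        ∑ n ∈ Finset.Ioo a i, μ n (Msp i n) (Msp n a)) :
    ∀ i a : ℕ, a < i → i ≤ m → d (d (Msp i a)) = 0 :=
  stmt_14_general m bdim A G d μ Msp hMgrade hassoc hleib hbdry
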